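/- arXiv:2205.04984 — 2 statements merged into one kernel-verified Lean document; each statement's English description precedes it below -/
import Mathlib

section
/- Fix an integer c ≥ 2 and let G be a finite double tree with no c-balanced double tree decomposition that has the minimum number of vertices among all such double trees. If a vertex v of G is adjacent to ℓ ≥ 1 bad 3-vertices via their double edges, then d_G(v) ≥ 2ℓ + c + 1. -/
/-- A multigraph without loops: edges `E` with an endpoint map into unordered
pairs of vertices, no edge being a loop. -/
structure Multigraph (V : Type*) (E : Type*) where
  ends : E → Sym2 V
  loopless : ∀ e, ¬ (ends e).IsDiag

namespace Multigraph

variable {V E : Type*}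

/-- `a` and `b` are joined by an edge belonging to the edge set `S`. -/
def Adj (G : Multigraph V E) (S : Set E) (a b : V) : Prop :=
  ∃ e ∈ S, G.ends e = s(a, b)

/-- Reachability in the spanning subgraph with edge set `S`. -/
def Reachable (G : Multigraph V E) (S : Set E) (a b : V) : Prop :=
  Relation.ReflTransGen (G.Adj S) a b

/-- The spanning subgraph with edge set `S` is connected. -/
def Connected (G : Multigraph V E) (S : Set E) : Prop :=
  ∀ a b : V, G.Reachable S a b

/-- The spanning subgraph with edge set `S` is acyclic: every edge of `S`
is a bridge of `S`. -/
def Acyclic (G : Multigraph V E) (S : Set E) : Prop :=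
  ∀ e ∈ S, ∀ a b : V, G.ends e = s(a, b) → ¬ G.Reachable (S \ {e}) a b

/-- `S` is the edge set of a spanning tree: connected and acyclic. -/
def IsSpanningTree (G : Multigraph V E) (S : Set E) : Prop :=
  G.Connected S ∧ G.Acyclic S

/-- The edges of `S` incident to `v`. -/
def incEdges (G : Multigraph V E) (S : Set E) (v : V) : Set E :=
  {e ∈ S | v ∈ G.ends e}

/-- The degree of `v` in the spanning subgraph with edge set `S`. -/
noncomputable def deg (G : Multigraph V E) (S : Set E) (v : V) : ℕ :=
  (G.incEdges S v).ncard

/-- `T1, T2` form a double tree decomposition of `G`: they partition the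
edges of `G` and are both spanning trees. -/
def IsDTD (G : Multigraph V E) (T1 T2 : Set E) : Prop :=
  T1 ∪ T2 = Set.univ ∧ Disjoint T1 T2 ∧ G.IsSpanningTree T1 ∧ G.IsSpanningTree T2

/-- `G` is a double tree: the edge-disjoint union of two spanning trees. -/
def IsDoubleTree (G : Multigraph V E) : Prop :=
  ∃ T1 T2, G.IsDTD T1 T2

/-- A decomposition into two spanning subgraphs is `c`-balanced if at each
vertex the two degrees differ by at most `c`. -/
def Balanced (G : Multigraph V E) (c : ℕ) (S1 S2 : Set E) : Prop :=
  ∀ v : V, |(G.deg S1 v : ℤ) - (G.deg S2 v : ℤ)| ≤ (c : ℤ)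

end Multigraph

namespace Multigraph

variable {V E : Type*}

/-- `G` admits no `c`-balanced double tree decomposition. -/
def NoBalancedDTD (c : ℕ) (G : Multigraph V E) : Prop :=
  ¬ ∃ T1 T2 : Set E, G.IsDTD T1 T2 ∧ G.Balanced c T1 T2

/-- `v` is big: its degree exceeds `c + 2`. -/
def Big (G : Multigraph V E) (c : ℕ) (v : V) : Prop :=
  c + 2 < G.deg Set.univ v

/-- `v` is small: its degree is at most `c + 2`. -/
def Small (G : Multigraph V E) (c : ℕ) (v : V) : Prop :=
  G.deg Set.univ v ≤ c + 2

/-- `u` and `z` are joined by a double edge. -/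
def DoubleEdge (G : Multigraph V E) (u z : V) : Prop :=
  ∃ e1 e2 : E, e1 ≠ e2 ∧ G.ends e1 = s(u, z) ∧ G.ends e2 = s(u, z)

/-- `u` is a bad 3-vertex: it has degree 3, a small neighbour, and is joined
to a big vertex by a double edge. -/
def Bad3 (G : Multigraph V E) (c : ℕ) (u : V) : Prop :=
  G.deg Set.univ u = 3 ∧
  (∃ w, G.Adj Set.univ u w ∧ G.Small c w) ∧
  (∃ z, G.DoubleEdge u z ∧ G.Big c z)

/-- `u` is a poor 3-vertex: it has degree 3 and three distinct neighbours,
two big and one small. -/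
def Poor3 (G : Multigraph V E) (c : ℕ) (u : V) : Prop :=
  G.deg Set.univ u = 3 ∧
  ∃ x y s : V, x ≠ y ∧ x ≠ s ∧ y ≠ s ∧
    G.Adj Set.univ u x ∧ G.Adj Set.univ u y ∧ G.Adj Set.univ u s ∧
    G.Big c x ∧ G.Big c y ∧ G.Small c s

end Multigraph

/-!
Suppose `d(v) ≤ 2ℓ + c`. In a double tree no edge joins two vertices that are doubly joined to
`v`, and a vertex `u ∈ U`, having degree 3, has exactly one edge besides its double edge to `v`.
Deleting these double edges and identifying every `u ∈ U` with `v` therefore gives a double tree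
`G'` with `ℓ` fewer vertices. A `c`-balanced decomposition of `G'` lifts to one of `G` by adding
one edge of each double edge to each tree: degrees outside `U ∪ {v}` do not change, each `u`
gets degrees 2 and 1, and as both trees contain `ℓ` edges at `v`, the two degrees of `v` differ
by at most `d(v) - 2ℓ ≤ c`. So `G'` contradicts the minimality of `G`.
-/

namespace Multigraph

variable {V E : Type*} {G : Multigraph V E}

section Basic

variable {S S' T T1 T2 : Set E} {a b u v w x y : V} {e f : E}

lemma Adj.symm (h : G.Adj S a b) : G.Adj S b a := by
  obtain ⟨e, he, hab⟩ := h
  exact ⟨e, he, hab.trans Sym2.eq_swap⟩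

lemma Reachable.refl (a : V) : G.Reachable S a a := Relation.ReflTransGen.refl

lemma Reachable.trans (h : G.Reachable S a b) (h' : G.Reachable S b x) : G.Reachable S a x :=
  Relation.ReflTransGen.trans h h'

lemma Reachable.symm (h : G.Reachable S a b) : G.Reachable S b a := by
  induction h with
  | refl => exact Relation.ReflTransGen.refl
  | tail _ hbc ih => exact Relation.ReflTransGen.head hbc.symm ih

lemma reachable_of_ends (he : e ∈ S) (h : G.ends e = s(a, b)) : G.Reachable S a b :=
  Relation.ReflTransGen.single ⟨e, he, h⟩

lemma Reachable.mono (hS : S ⊆ S') (h : G.Reachable S a b) : G.Reachable S' a b :=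
  Relation.ReflTransGen.mono (fun _ _ ⟨e, he, hab⟩ => ⟨e, hS he, hab⟩) _ _ h

lemma Reachable.map {V₂ E₂ : Type*} {H : Multigraph V₂ E₂} {S₂ : Set E₂} (ρ : V → V₂)
    (hstep : ∀ x y, G.Adj S x y → H.Reachable S₂ (ρ x) (ρ y)) (h : G.Reachable S a b) :
    H.Reachable S₂ (ρ a) (ρ b) :=
  Relation.ReflTransGen.lift' ρ hstep _ _ h

lemma Reachable.eq_of_forall_notMem (h : G.Reachable S a b) (ha : ∀ e ∈ S, a ∉ G.ends e) :
    a = b := by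
  rcases Relation.ReflTransGen.cases_head h with rfl | ⟨c, ⟨e, he, hac⟩, _⟩
  · rfl
  · exact absurd (hac ▸ Sym2.mem_mk_left a c) (ha e he)

lemma ne_of_ends (h : G.ends e = s(a, b)) : a ≠ b := fun hab =>
  G.loopless e (by rw [h, hab]; exact Sym2.mk_isDiag_iff.mpr rfl)

lemma exists_ends_eq (G : Multigraph V E) (e : E) : ∃ a b, G.ends e = s(a, b) :=
  ⟨_, _, (Sym2.mk_surjective (G.ends e)).choose_spec.symm⟩

lemma Reachable.of_pendant (hf : G.ends f = s(x, w)) (hx : ∀ e ∈ S, x ∈ G.ends e → e = f)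
    (h : G.Reachable S x y) (hy : y ≠ x) : G.Reachable (S \ {f}) w y := by
  classical
  let ρ : V → V := fun z => if z = x then w else z
  have hstep : ∀ a b, G.Adj S a b → G.Reachable (S \ {f}) (ρ a) (ρ b) := by
    rintro a b ⟨e, he, hab⟩
    by_cases hef : e = f
    · subst hef
      rcases Sym2.eq_iff.mp (hf.symm.trans hab) with ⟨rfl, rfl⟩ | ⟨rfl, rfl⟩ <;>
        simp [ρ, Reachable.refl]
    · have hxe : x ∉ G.ends e := fun hxe => hef (hx e he hxe)
      have ha : a ≠ x := by rintro rfl; exact hxe (hab ▸ Sym2.mem_mk_left _ _)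
      have hb : b ≠ x := by rintro rfl; exact hxe (hab ▸ Sym2.mem_mk_right _ _)
      simpa [ρ, ha, hb] using reachable_of_ends (S := S \ {f}) ⟨he, hef⟩ hab
  simpa [ρ, hy] using h.map ρ hstep

lemma Acyclic.eq_of_ends_eq (hT : G.Acyclic T) (he : e ∈ T) (hf : f ∈ T)
    (h : G.ends e = G.ends f) : e = f := by
  by_contra hef
  obtain ⟨a, b, hab⟩ := G.exists_ends_eq e
  exact hT e he a b hab (reachable_of_ends ⟨hf, Ne.symm hef⟩ (h ▸ hab))

lemma Connected.one_le_deg [Finite E] (hS : G.Connected S) (hxy : x ≠ y) : 1 ≤ G.deg S x := by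
  rw [deg, Nat.one_le_iff_ne_zero, Ne, Set.ncard_eq_zero (Set.toFinite _)]
  intro hempty
  exact hxy ((hS x y).eq_of_forall_notMem fun e he hxe =>
    (Set.eq_empty_iff_forall_notMem.mp hempty) e ⟨he, hxe⟩)

lemma DoubleEdge.ne (h : G.DoubleEdge u v) : u ≠ v := by
  obtain ⟨e, -, -, he, -⟩ := h
  exact ne_of_ends he

lemma DoubleEdge.eq_of_deg_eq_three [Finite E] (h : G.DoubleEdge u v)
    (h3 : G.deg Set.univ u = 3) (he : u ∈ G.ends e) (hf : u ∈ G.ends f)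
    (hve : v ∉ G.ends e) (hvf : v ∉ G.ends f) : e = f := by
  obtain ⟨e1, e2, h12, h1, h2⟩ := h
  by_contra hef
  have hv1 : v ∈ G.ends e1 := h1 ▸ Sym2.mem_mk_right _ _
  have hv2 : v ∈ G.ends e2 := h2 ▸ Sym2.mem_mk_right _ _
  have hsub : ({e1, e2, e, f} : Set E) ⊆ G.incEdges Set.univ u := by
    rintro g (rfl | rfl | rfl | rfl)
    exacts [⟨trivial, h1 ▸ Sym2.mem_mk_left _ _⟩, ⟨trivial, h2 ▸ Sym2.mem_mk_left _ _⟩,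
      ⟨trivial, he⟩, ⟨trivial, hf⟩]
  have hcard : ({e1, e2, e, f} : Set E).ncard = 4 := by
    rw [Set.ncard_insert_of_notMem, Set.ncard_insert_of_notMem, Set.ncard_pair hef]
    · rintro (rfl | rfl) <;> contradiction
    · rintro (rfl | rfl | rfl) <;> contradiction
  have := Set.ncard_le_ncard hsub (Set.toFinite _)
  rw [hcard] at this
  exact absurd h3 (by unfold deg; omega)

namespace IsDTD

lemma symm (h : G.IsDTD T1 T2) : G.IsDTD T2 T1 :=
  ⟨Set.union_comm T1 T2 ▸ h.1, h.2.1.symm, h.2.2.2, h.2.2.1⟩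

lemma mem_or_mem (h : G.IsDTD T1 T2) (e : E) : e ∈ T1 ∨ e ∈ T2 := by
  simpa [← h.1] using Set.mem_univ e

lemma exists_mem_of_doubleEdge (h : G.IsDTD T1 T2) (huv : G.DoubleEdge u v) :
    ∃ e ∈ T1, G.ends e = s(u, v) := by
  obtain ⟨e1, e2, h12, h1, h2⟩ := huv
  rcases h.mem_or_mem e1 with he1 | he1
  · exact ⟨e1, he1, h1⟩
  rcases h.mem_or_mem e2 with he2 | he2
  · exact ⟨e2, he2, h2⟩
  exact absurd (h.2.2.2.2.eq_of_ends_eq he1 he2 (h1.trans h2.symm)) h12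

lemma deg_add_deg [Finite E] (h : G.IsDTD T1 T2) (x : V) :
    G.deg T1 x + G.deg T2 x = G.deg Set.univ x := by
  have hunion : G.incEdges T1 x ∪ G.incEdges T2 x = G.incEdges Set.univ x := by
    ext e
    simp only [incEdges, Set.mem_union, Set.mem_ofPred_eq, Set.mem_univ, true_and]
    have := h.mem_or_mem e
    tauto
  have hdisj : Disjoint (G.incEdges T1 x) (G.incEdges T2 x) :=
    h.2.1.mono (fun _ he => he.1) (fun _ he => he.1)
  rw [deg, deg, deg, ← hunion, Set.ncard_union_eq hdisj (Set.toFinite _) (Set.toFinite _)]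

lemma abs_deg_sub_add_le [Finite E] {k : ℕ} (h : G.IsDTD T1 T2) (h1 : k ≤ G.deg T1 x)
    (h2 : k ≤ G.deg T2 x) :
    |(G.deg T1 x : ℤ) - G.deg T2 x| + 2 * k ≤ G.deg Set.univ x := by
  have hsum := h.deg_add_deg x
  have : |(G.deg T1 x : ℤ) - G.deg T2 x| ≤ G.deg Set.univ x - 2 * k :=
    abs_le.mpr ⟨by omega, by omega⟩
  omega

lemma card_le_deg [Finite E] {U : Finset V} (h : G.IsDTD T1 T2)
    (hU : ∀ u ∈ U, G.DoubleEdge u v) : U.card ≤ G.deg T1 v := by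
  rw [deg, Set.ncard_eq_toFinset_card _ (Set.toFinite _)]
  refine Finset.card_le_card_of_forall_subsingleton (fun u e => G.ends e = s(u, v))
    (fun u hu => ?_) (fun e _ u₁ hu₁ u₂ hu₂ => ?_)
  · obtain ⟨e, he, huv⟩ := h.exists_mem_of_doubleEdge (hU u hu)
    exact ⟨e, by simpa [incEdges, huv] using he, huv⟩
  · exact Sym2.congr_left.mp (hu₁.2.symm.trans hu₂.2)

/-- The edge would close a triangle with the two double edges in the tree containing it. -/
lemma not_adj_of_doubleEdge (h : G.IsDTD T1 T2) {u' : V} (hu : G.DoubleEdge u v)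
    (hu' : G.DoubleEdge u' v) : ¬ G.Adj Set.univ u u' := by
  rintro ⟨e, -, he⟩
  wlog heT : e ∈ T1 generalizing T1 T2
  · exact this h.symm ((h.mem_or_mem e).resolve_left heT)
  have hve : v ∉ G.ends e := by
    rw [he, Sym2.mem_iff]
    rintro (rfl | rfl)
    exacts [hu.ne rfl, hu'.ne rfl]
  obtain ⟨e1, he1, h1⟩ := h.exists_mem_of_doubleEdge hu
  obtain ⟨e2, he2, h2⟩ := h.exists_mem_of_doubleEdge hu'
  have hne : ∀ g z, G.ends g = s(z, v) → g ∉ ({e} : Set E) := by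
    rintro g z hg rfl
    exact hve (hg ▸ Sym2.mem_mk_right _ _)
  exact h.2.2.1.2 e heT u u' he
    ((reachable_of_ends (S := T1 \ {e}) ⟨he1, hne _ _ h1⟩ h1).trans
      (reachable_of_ends (S := T1 \ {e}) ⟨he2, hne _ _ h2⟩ h2).symm)

end IsDTD

end Basic

section Congr

variable {V₂ E₂ : Type*}

lemma _root_.Sym2.map_equiv_eq_iff (σ : V ≃ V₂) {z : Sym2 V} {a b : V₂} :
    z.map σ = s(a, b) ↔ z = s(σ.symm a, σ.symm b) := by
  constructor
  · rintro h
    simpa [Sym2.map_map] using congrArg (Sym2.map σ.symm) h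
  · rintro rfl
    simp

variable (σ : V ≃ V₂) (τ : E ≃ E₂)

def congr (G : Multigraph V E) : Multigraph V₂ E₂ where
  ends e := (G.ends (τ.symm e)).map σ
  loopless e := by rw [Sym2.isDiag_map σ.injective]; exact G.loopless _

variable {S S1 S2 : Set E₂} {a b : V₂}

lemma adj_congr_iff :
    (G.congr σ τ).Adj S a b ↔ G.Adj (τ ⁻¹' S) (σ.symm a) (σ.symm b) := by
  simp only [Adj, congr, Sym2.map_equiv_eq_iff]
  exact ⟨fun ⟨e, he, h⟩ => ⟨τ.symm e, by simpa using he, h⟩,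
    fun ⟨e, he, h⟩ => ⟨τ e, he, by simpa using h⟩⟩

lemma reachable_congr_iff :
    (G.congr σ τ).Reachable S a b ↔ G.Reachable (τ ⁻¹' S) (σ.symm a) (σ.symm b) := by
  constructor
  · exact Reachable.map σ.symm fun x y h => Relation.ReflTransGen.single
      ((adj_congr_iff σ τ).mp h)
  · intro h
    simpa using h.map σ fun x y h => Relation.ReflTransGen.single
      ((adj_congr_iff σ τ).mpr (by simpa using h))

lemma isSpanningTree_congr_iff :
    (G.congr σ τ).IsSpanningTree S ↔ G.IsSpanningTree (τ ⁻¹' S) := by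
  have hpre : ∀ e, τ ⁻¹' {e} = {τ.symm e} := fun e => by ext; simp [Equiv.eq_symm_apply]
  simp only [IsSpanningTree, Connected, Acyclic, reachable_congr_iff]
  refine and_congr ⟨fun h x y => by simpa using h (σ x) (σ y), fun h x y => h _ _⟩ ?_
  refine ⟨fun h e he x y hxy hr => h (τ e) he (σ x) (σ y) ?_ ?_,
    fun h e he x y hxy hr => h (τ.symm e) (by simpa using he) (σ.symm x) (σ.symm y) ?_ ?_⟩
  · simp [congr, hxy]
  · simpa [Set.preimage_sdiff, hpre] using hr
  · simpa [congr, Sym2.map_equiv_eq_iff] using hxy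
  · simpa [Set.preimage_sdiff, hpre] using hr

lemma deg_congr (a : V₂) : (G.congr σ τ).deg S a = G.deg (τ ⁻¹' S) (σ.symm a) := by
  have : (G.congr σ τ).incEdges S a = τ '' G.incEdges (τ ⁻¹' S) (σ.symm a) := by
    ext e
    simp only [incEdges, congr, Sym2.mem_map, Set.mem_image, Set.mem_ofPred_eq,
      Set.mem_preimage]
    constructor
    · rintro ⟨he, x, hx, rfl⟩
      exact ⟨τ.symm e, ⟨by simpa using he, by simpa using hx⟩, by simp⟩
    · rintro ⟨e, ⟨he, hx⟩, rfl⟩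
      exact ⟨he, σ.symm a, by simpa using hx, by simp⟩
  rw [deg, deg, this, Set.ncard_image_of_injective _ τ.injective]

lemma isDTD_congr_iff : (G.congr σ τ).IsDTD S1 S2 ↔ G.IsDTD (τ ⁻¹' S1) (τ ⁻¹' S2) := by
  simp only [IsDTD, isSpanningTree_congr_iff, ← Set.preimage_union,
    Set.preimage_eq_univ_iff, τ.range_eq_univ, Set.univ_subset_iff,
    Set.disjoint_preimage_iff τ.surjective]

lemma IsDoubleTree.congr (h : G.IsDoubleTree) : (G.congr σ τ).IsDoubleTree := by
  obtain ⟨T1, T2, hT⟩ := h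
  exact ⟨τ.symm ⁻¹' T1, τ.symm ⁻¹' T2, by simpa [isDTD_congr_iff] using hT⟩

lemma NoBalancedDTD.congr {c : ℕ} (h : G.NoBalancedDTD c) : (G.congr σ τ).NoBalancedDTD c := by
  rintro ⟨S1, S2, hS, hbal⟩
  refine h ⟨τ ⁻¹' S1, τ ⁻¹' S2, (isDTD_congr_iff σ τ).mp hS, fun x => ?_⟩
  simpa [deg_congr] using hbal (σ x)

lemma exists_fin_of_noBalancedDTD [Finite V] [Finite E] {c : ℕ} (hG : G.IsDoubleTree)
    (hbal : G.NoBalancedDTD c) :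
    ∃ H : Multigraph (Fin (Nat.card V)) (Fin (Nat.card E)),
      H.IsDoubleTree ∧ H.NoBalancedDTD c :=
  ⟨G.congr (Finite.equivFin V) (Finite.equivFin E), hG.congr _ _, hbal.congr _ _⟩

end Congr

section Collapse

variable {U : Set V} {v x y : V} {T1 T2 : Set E}

variable (G U v) in
def edgesTo : Set E := {e | ∃ u ∈ U, G.ends e = s(u, v)}

lemma IsDTD.exists_notMem_of_notMem_edgesTo (h : G.IsDTD T1 T2)
    (hU : ∀ u ∈ U, G.DoubleEdge u v) : ∀ e ∉ G.edgesTo U v, ∃ x ∈ G.ends e, x ≠ v ∧ x ∉ U := by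
  intro e he
  obtain ⟨a, b, hab⟩ := G.exists_ends_eq e
  by_contra! hin
  have ha := hin a (hab ▸ Sym2.mem_mk_left a b)
  have hb := hin b (hab ▸ Sym2.mem_mk_right a b)
  by_cases hav : a = v
  · subst hav
    exact he ⟨b, hb (ne_of_ends hab).symm, hab.trans Sym2.eq_swap⟩
  by_cases hbv : b = v
  · subst hbv
    exact he ⟨a, ha hav, hab⟩
  exact h.not_adj_of_doubleEdge (hU a (ha hav)) (hU b (hb hbv)) ⟨e, trivial, hab⟩

open scoped Classical in
noncomputable def collapseMap (hv : v ∉ U) (x : V) : {x // x ∉ U} :=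
  if hx : x ∈ U then ⟨v, hv⟩ else ⟨x, hx⟩

variable (hv : v ∉ U)

lemma collapseMap_of_mem (hx : x ∈ U) : collapseMap hv x = ⟨v, hv⟩ := dif_pos hx

lemma collapseMap_of_notMem (hx : x ∉ U) : collapseMap hv x = ⟨x, hx⟩ := dif_neg hx

lemma collapseMap_val (a : {x // x ∉ U}) : collapseMap hv a.1 = a :=
  collapseMap_of_notMem hv a.2

lemma collapseMap_eq_iff (hxv : x ≠ v) (hxU : x ∉ U) : collapseMap hv y = ⟨x, hxU⟩ ↔ y = x := by
  by_cases hy : y ∈ U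
  · rw [collapseMap_of_mem hv hy]
    exact ⟨fun h => absurd (congrArg Subtype.val h).symm hxv, fun h => absurd (h ▸ hy) hxU⟩
  · rw [collapseMap_of_notMem hv hy, Subtype.mk.injEq]

lemma collapseMap_eq_of_mem_edgesTo {e : E} (he : e ∈ G.edgesTo U v) (hxy : G.ends e = s(x, y)) :
    collapseMap hv x = collapseMap hv y := by
  obtain ⟨u, hu, heu⟩ := he
  rcases Sym2.eq_iff.mp (heu.symm.trans hxy) with ⟨rfl, rfl⟩ | ⟨rfl, rfl⟩ <;>
    rw [collapseMap_of_mem hv hu, collapseMap_of_notMem hv hv]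

variable (G) in
noncomputable def collapse (hloop : ∀ e ∉ G.edgesTo U v, ∃ x ∈ G.ends e, x ≠ v ∧ x ∉ U) :
    Multigraph {x // x ∉ U} {e // e ∉ G.edgesTo U v} where
  ends e := (G.ends e).map (collapseMap hv)
  loopless e := by
    obtain ⟨x, hx, hxv, hxU⟩ := hloop e e.2
    obtain ⟨y, hy⟩ := Sym2.mem_iff_exists.mp hx
    rw [hy, Sym2.map_mk, Sym2.mk_isDiag_iff, collapseMap_of_notMem hv hxU, eq_comm,
      collapseMap_eq_iff hv hxv hxU]
    exact (ne_of_ends hy).symm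

variable (hloop : ∀ e ∉ G.edgesTo U v, ∃ x ∈ G.ends e, x ≠ v ∧ x ∉ U)

lemma collapse_ends (e : {e // e ∉ G.edgesTo U v}) :
    (G.collapse hv hloop).ends e = (G.ends e).map (collapseMap hv) := rfl

lemma Reachable.collapse {S : Set E} (h : G.Reachable S x y) :
    (G.collapse hv hloop).Reachable {e | e.1 ∈ S} (collapseMap hv x) (collapseMap hv y) := by
  refine h.map _ fun a b ⟨e, he, hab⟩ => ?_
  by_cases heD : e ∈ G.edgesTo U v
  · rw [collapseMap_eq_of_mem_edgesTo hv heD hab]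
    exact Reachable.refl _
  · exact reachable_of_ends (e := ⟨e, heD⟩) he (by rw [collapse_ends, hab, Sym2.map_mk])

lemma reachable_collapseMap {S : Set E} (hstar : ∀ u ∈ U, ∃ e ∈ S, G.ends e = s(u, v))
    (x : V) : G.Reachable S x (collapseMap hv x).1 := by
  by_cases hx : x ∈ U
  · obtain ⟨e, he, hxe⟩ := hstar x hx
    rw [collapseMap_of_mem hv hx]
    exact reachable_of_ends he hxe
  · rw [collapseMap_of_notMem hv hx]
    exact Reachable.refl _

lemma reachable_iff_of_collapseMap {S : Set E} {a b : {x // x ∉ U}}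
    (hS : ∀ x, G.Reachable S x (collapseMap hv x).1)
    (h : s(collapseMap hv x, collapseMap hv y) = s(a, b)) :
    G.Reachable S x y ↔ G.Reachable S a.1 b.1 := by
  rcases Sym2.eq_iff.mp h with ⟨rfl, rfl⟩ | ⟨rfl, rfl⟩
  · exact ⟨fun h => (hS x).symm.trans (h.trans (hS y)),
      fun h => (hS x).trans (h.trans (hS y).symm)⟩
  · exact ⟨fun h => ((hS x).symm.trans (h.trans (hS y))).symm,
      fun h => (hS x).trans (h.symm.trans (hS y).symm)⟩

lemma Reachable.of_collapse {S : Set E} {A : Set {e // e ∉ G.edgesTo U v}}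
    {a b : {x // x ∉ U}} (hA : ∀ e ∈ A, e.1 ∈ S) (hS : ∀ x, G.Reachable S x (collapseMap hv x).1)
    (h : (G.collapse hv hloop).Reachable A a b) : G.Reachable S a.1 b.1 := by
  refine h.map Subtype.val fun a b ⟨e, he, hab⟩ => ?_
  obtain ⟨x, y, hxy⟩ := G.exists_ends_eq e.1
  rw [collapse_ends, hxy, Sym2.map_mk] at hab
  exact (reachable_iff_of_collapseMap hv hS hab).mp (reachable_of_ends (hA e he) hxy)

lemma IsSpanningTree.collapse {T : Set E} (hT : G.IsSpanningTree T)
    (hstar : ∀ u ∈ U, ∃ e ∈ T, G.ends e = s(u, v)) :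
    (G.collapse hv hloop).IsSpanningTree {e | e.1 ∈ T} := by
  refine ⟨fun a b => by simpa only [collapseMap_val] using (hT.1 a.1 b.1).collapse hv hloop, ?_⟩
  rintro e he a b hab hr
  obtain ⟨x, y, hxy⟩ := G.exists_ends_eq e.1
  have hS : ∀ z, G.Reachable (T \ {e.1}) z (collapseMap hv z).1 := by
    refine reachable_collapseMap hv fun u hu => ?_
    obtain ⟨f, hf, huf⟩ := hstar u hu
    exact ⟨f, ⟨hf, fun hfe => e.2 (hfe ▸ ⟨u, hu, huf⟩)⟩, huf⟩
  rw [collapse_ends, hxy, Sym2.map_mk] at hab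
  refine hT.2 e.1 he x y hxy ((reachable_iff_of_collapseMap hv hS hab).mpr
    (hr.of_collapse hv hloop ?_ hS))
  rintro f ⟨hf, hfe⟩
  exact ⟨hf, fun h => hfe (Subtype.ext h)⟩

lemma IsSpanningTree.lift (hone : ∀ u ∈ U, (G.incEdges (G.edgesTo U v)ᶜ u).Subsingleton)
    {A : Set {e // e ∉ G.edgesTo U v}} (hA : (G.collapse hv hloop).IsSpanningTree A)
    {C : Set E} (hCD : C ⊆ G.edgesTo U v) (hC : ∀ u ∈ U, ∃ e ∈ C, G.ends e = s(u, v))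
    (hCinj : ∀ e ∈ C, ∀ f ∈ C, G.ends e = G.ends f → e = f) :
    G.IsSpanningTree (Subtype.val '' A ∪ C) := by
  set T := Subtype.val '' A ∪ C
  have hmemA : ∀ g : {e // e ∉ G.edgesTo U v}, g.1 ∈ T → g ∈ A := by
    rintro g (⟨g', hg', hgg⟩ | hgC)
    · exact Subtype.ext hgg ▸ hg'
    · exact absurd (hCD hgC) g.2
  have hpull : ∀ (S : Set E) (g : {e // e ∉ G.edgesTo U v}), S ⊆ T \ {g.1} →
      {e : {e // e ∉ G.edgesTo U v} | e.1 ∈ S} ⊆ A \ {g} := fun S g hS e he =>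
    ⟨hmemA e (hS he).1, fun h => (hS he).2 (congrArg Subtype.val h)⟩
  have hstar := reachable_collapseMap hv (S := T) fun u hu =>
    (hC u hu).imp fun e he => ⟨Or.inr he.1, he.2⟩
  refine ⟨fun x y => (hstar x).trans (((hA.1 _ _).of_collapse hv hloop
    (fun e he => Or.inl ⟨e, he, rfl⟩) hstar).trans (hstar y).symm), ?_⟩
  rintro t ht a b hab hr
  rcases ht with ⟨g, hg, rfl⟩ | htC
  · refine hA.2 g hg (collapseMap hv a) (collapseMap hv b) (by rw [collapse_ends, hab]; rfl) ?_
    exact (hr.collapse hv hloop).mono (hpull _ g subset_rfl)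
  obtain ⟨u, hu, htu⟩ := hCD htC
  have huv : u ≠ v := ne_of_ends htu
  have hur : G.Reachable (T \ {t}) u v := by
    rcases Sym2.eq_iff.mp (htu.symm.trans hab) with ⟨rfl, rfl⟩ | ⟨rfl, rfl⟩
    exacts [hr, hr.symm]
  have hout : ∀ e ∈ T \ {t}, u ∈ G.ends e → e ∉ G.edgesTo U v := by
    rintro e ⟨he, het⟩ hue ⟨u', hu', heu'⟩
    obtain rfl : u = u' := by
      rw [heu', Sym2.mem_iff] at hue
      exact hue.resolve_right huv
    rcases he with ⟨g, -, rfl⟩ | heC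
    · exact g.2 ⟨u, hu, heu'⟩
    · exact het (hCinj e heC t htC (heu'.trans htu.symm))
  by_cases hf : ∃ f ∈ T \ {t}, u ∈ G.ends f
  · obtain ⟨f, hfT, huf⟩ := hf
    obtain ⟨w, hw⟩ := Sym2.mem_iff_exists.mp huf
    have hfD := hout f hfT huf
    have hwv : G.Reachable ((T \ {t}) \ {f}) w v :=
      hur.of_pendant hw (fun e he hue => hone u hu ⟨hout e he hue, hue⟩ ⟨hfD, huf⟩) huv.symm
    refine hA.2 ⟨f, hfD⟩ (hmemA ⟨f, hfD⟩ hfT.1) (collapseMap hv v) (collapseMap hv w) ?_ ?_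
    · rw [collapse_ends, hw, Sym2.map_mk, collapseMap_of_mem hv hu, collapseMap_of_notMem hv hv]
    · refine ((hwv.collapse hv hloop).mono (hpull _ ⟨f, hfD⟩ ?_)).symm
      exact Set.sdiff_subset_sdiff_left Set.sdiff_subset
  · push Not at hf
    exact huv (hur.eq_of_forall_notMem hf)

namespace IsDTD

lemma collapse (h : G.IsDTD T1 T2) (hU : ∀ u ∈ U, G.DoubleEdge u v) :
    (G.collapse hv hloop).IsDTD {e | e.1 ∈ T1} {e | e.1 ∈ T2} := by
  refine ⟨?_, h.2.1.preimage _, h.2.2.1.collapse hv hloop fun u hu =>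
    h.exists_mem_of_doubleEdge (hU u hu), h.2.2.2.collapse hv hloop fun u hu =>
    h.symm.exists_mem_of_doubleEdge (hU u hu)⟩
  ext e
  simpa using h.mem_or_mem e.1

lemma lift (h : G.IsDTD T1 T2) (hU : ∀ u ∈ U, G.DoubleEdge u v)
    (hone : ∀ u ∈ U, (G.incEdges (G.edgesTo U v)ᶜ u).Subsingleton)
    {A B : Set {e // e ∉ G.edgesTo U v}} (hAB : (G.collapse hv hloop).IsDTD A B) :
    G.IsDTD (Subtype.val '' A ∪ (T1 ∩ G.edgesTo U v))
      (Subtype.val '' B ∪ (T2 ∩ G.edgesTo U v)) := by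
  have hstar : ∀ {T T' : Set E}, G.IsDTD T T' → ∀ u ∈ U,
      ∃ e ∈ T ∩ G.edgesTo U v, G.ends e = s(u, v) := fun hT u hu =>
    (hT.exists_mem_of_doubleEdge (hU u hu)).imp fun e he => ⟨⟨he.1, u, hu, he.2⟩, he.2⟩
  refine ⟨?_, ?_, hAB.2.2.1.lift hv hloop hone Set.inter_subset_right (hstar h)
      fun e he f hf => h.2.2.1.2.eq_of_ends_eq he.1 hf.1,
    hAB.2.2.2.lift hv hloop hone Set.inter_subset_right (hstar h.symm)
      fun e he f hf => h.2.2.2.2.eq_of_ends_eq he.1 hf.1⟩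
  · refine Set.eq_univ_of_forall fun e => ?_
    by_cases heD : e ∈ G.edgesTo U v
    · rcases h.mem_or_mem e with he | he
      exacts [Or.inl (Or.inr ⟨he, heD⟩), Or.inr (Or.inr ⟨he, heD⟩)]
    · rcases hAB.mem_or_mem ⟨e, heD⟩ with he | he
      exacts [Or.inl (Or.inl ⟨_, he, rfl⟩), Or.inr (Or.inl ⟨_, he, rfl⟩)]
  · rw [Set.disjoint_union_left, Set.disjoint_union_right, Set.disjoint_union_right]
    refine ⟨⟨(Set.disjoint_image_iff Subtype.val_injective).mpr hAB.2.1, ?_⟩, ?_,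
      h.2.1.mono Set.inter_subset_left Set.inter_subset_left⟩
    · exact Set.disjoint_left.mpr fun _ ⟨g, _, hg⟩ he => g.2 (hg ▸ he.2)
    · exact Set.disjoint_right.mpr fun _ ⟨g, _, hg⟩ he => g.2 (hg ▸ he.2)

end IsDTD

lemma deg_lift [Finite E] {A : Set {e // e ∉ G.edgesTo U v}} {C : Set E}
    (hCD : C ⊆ G.edgesTo U v) (hxv : x ≠ v) (hxU : x ∉ U) :
    G.deg (Subtype.val '' A ∪ C) x = (G.collapse hv hloop).deg A ⟨x, hxU⟩ := by
  have hC : ∀ e ∈ C, x ∉ G.ends e := by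
    intro e he hxe
    obtain ⟨u, hu, heu⟩ := hCD he
    rw [heu, Sym2.mem_iff] at hxe
    rcases hxe with rfl | rfl
    exacts [hxU hu, hxv rfl]
  have : G.incEdges (Subtype.val '' A ∪ C) x =
      Subtype.val '' (G.collapse hv hloop).incEdges A ⟨x, hxU⟩ := by
    ext e
    simp only [incEdges, collapse_ends, Sym2.mem_map, collapseMap_eq_iff hv hxv hxU,
      exists_eq_right, Set.mem_image, Set.mem_union, Set.mem_ofPred_eq]
    constructor
    · rintro ⟨⟨g, hg, rfl⟩ | heC, hxe⟩
      exacts [⟨g, ⟨hg, hxe⟩, rfl⟩, absurd hxe (hC e heC)]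
    · rintro ⟨g, ⟨hg, hxg⟩, rfl⟩
      exact ⟨Or.inl ⟨g, hg, rfl⟩, hxg⟩
  rw [deg, deg, this, Set.ncard_image_of_injective _ Subtype.val_injective]

end Collapse

variable {v : V} {T1 T2 : Set E}

lemma NoBalancedDTD.collapse [Finite E] {c : ℕ} {U : Finset V} (hv : v ∉ (U : Set V))
    (hloop : ∀ e ∉ G.edgesTo U v, ∃ x ∈ G.ends e, x ≠ v ∧ x ∉ (U : Set V))
    (hbal : G.NoBalancedDTD c) (hc : 1 ≤ c) (h : G.IsDTD T1 T2)
    (hU : ∀ u ∈ U, G.DoubleEdge u v ∧ G.deg Set.univ u = 3)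
    (hdeg : G.deg Set.univ v ≤ 2 * U.card + c) : (G.collapse hv hloop).NoBalancedDTD c := by
  have hU2 : ∀ u ∈ U, G.DoubleEdge u v := fun u hu => (hU u hu).1
  have hone : ∀ u ∈ (U : Set V), (G.incEdges (G.edgesTo U v)ᶜ u).Subsingleton := by
    have hvnot : ∀ u ∈ U, ∀ e, u ∈ G.ends e → e ∉ G.edgesTo U v → v ∉ G.ends e :=
      fun u hu e hue he hve => he ⟨u, hu, (Sym2.mem_and_mem_iff (hU2 u hu).ne).mp ⟨hue, hve⟩⟩
    exact fun u hu e ⟨he, hue⟩ f ⟨hf, huf⟩ => (hU2 u hu).eq_of_deg_eq_three (hU u hu).2 hue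
      huf (hvnot u hu e hue he) (hvnot u hu f huf hf)
  rintro ⟨A, B, hAB, hbalAB⟩
  have hlift := h.lift hv hloop hU2 hone hAB
  refine hbal ⟨_, _, hlift, fun x => ?_⟩
  by_cases hxU : x ∈ U
  · have hxv := (hU2 x hxU).ne
    have := hlift.abs_deg_sub_add_le (hlift.2.2.1.1.one_le_deg hxv)
      (hlift.2.2.2.1.one_le_deg hxv)
    rw [(hU x hxU).2] at this
    omega
  by_cases hxv : x = v
  · subst hxv
    have := hlift.abs_deg_sub_add_le (hlift.card_le_deg hU2) (hlift.symm.card_le_deg hU2)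
    omega
  · rw [deg_lift hv hloop Set.inter_subset_right hxv hxU,
      deg_lift hv hloop Set.inter_subset_right hxv hxU]
    exact hbalAB _

end Multigraph

open Multigraph

/-- **Theorem (Statement 11).** In a vertex-minimal double tree `G` with no
`c`-balanced double tree decomposition (`c ≥ 2`): if `v` is adjacent to
`ℓ ≥ 1` bad 3-vertices via their double edges, then `d_G(v) ≥ 2ℓ + c + 1`. -/
theorem bad_vertices_degree_bound (c : ℕ) (hc : 2 ≤ c) (n m : ℕ)
    (G : Multigraph (Fin n) (Fin m))
    (hG : G.IsDoubleTree) (hbal : G.NoBalancedDTD c)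
    (hmin : ∀ (n' m' : ℕ) (G' : Multigraph (Fin n') (Fin m')),
      G'.IsDoubleTree → G'.NoBalancedDTD c → n ≤ n')
    (v : Fin n) (ℓ : ℕ) (hl : 1 ≤ ℓ) (U : Finset (Fin n)) (hcard : U.card = ℓ)
    (hU : ∀ u ∈ U, G.Bad3 c u ∧ G.DoubleEdge u v) :
    2 * ℓ + c + 1 ≤ G.deg Set.univ v := by
  by_contra! hdeg
  obtain ⟨T1, T2, hT⟩ := hG
  have hU' : ∀ u ∈ U, G.DoubleEdge u v ∧ G.deg Set.univ u = 3 :=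
    fun u hu => ⟨(hU u hu).2, (hU u hu).1.1⟩
  have hv : v ∉ (U : Set (Fin n)) := fun hvU => (hU' v hvU).1.ne rfl
  have hloop := hT.exists_notMem_of_notMem_edgesTo (U := U) fun u hu => (hU' u hu).1
  obtain ⟨H, hH, hHbal⟩ := exists_fin_of_noBalancedDTD
    ⟨_, _, hT.collapse hv hloop fun u hu => (hU' u hu).1⟩
    (hbal.collapse hv hloop (by omega) hT hU' (by omega))
  have hsize : Nat.card {x // x ∉ (U : Set (Fin n))} = n - ℓ := by
    simp [Nat.card_eq_fintype_card, Fintype.card_subtype_compl, hcard]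
  have hle := hmin _ _ H hH hHbal
  have hn := v.pos
  omega
end

section
/- Fix an integer c ≥ 2 and let G = A + M (with A a spanning double tree and E(G) = E(A) ⊔ E(M)) be a finite graph with no c-balanced decomposition G = G1 ⊔ G2 in which A ∩ G1 and A ∩ G2 are spanning trees, chosen so that e(M) is minimal and, subject to this, |V(G)| is minimal. If e ∈ E(M) is incident to a vertex v, then v is big and d_G(v) ≡ c + 1 (mod 2). -/
namespace Multigraph

variable {V E : Type*}

/-- `G` admits a `c`-balanced decomposition `G1 ⊔ G2` such that `A ∩ G1` and
`A ∩ G2` are spanning trees. -/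
def GoodDecomp (G : Multigraph V E) (c : ℕ) (A : Set E) : Prop :=
  ∃ G1 G2 : Set E, G1 ∪ G2 = Set.univ ∧ Disjoint G1 G2 ∧
    G.Balanced c G1 G2 ∧
    G.IsSpanningTree (A ∩ G1) ∧ G.IsSpanningTree (A ∩ G2)

/-- The setup `G = A + M` being a counterexample: `A, M` partition the edges
of `G`, `A` is a spanning double tree, and `G` has no `c`-balanced
decomposition whose restrictions to `A` are spanning trees. -/
def AMCounterexample (G : Multigraph V E) (c : ℕ) (A M : Set E) : Prop :=
  A ∪ M = Set.univ ∧ Disjoint A M ∧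
  (∃ T1 T2 : Set E, T1 ∪ T2 = A ∧ Disjoint T1 T2 ∧
    G.IsSpanningTree T1 ∧ G.IsSpanningTree T2) ∧
  ¬ G.GoodDecomp c A

end Multigraph

/-!
Delete an edge `e ∈ M`. By minimality of `e(M)`, `G - e` (with `A` unchanged and `M - e`) is not a
counterexample, so it has a good decomposition `G₁ ⊔ G₂`. Since `G` has none, adding `e` to `G₁`
must break balance at an endpoint `u₁` of `e` where `d_{G₁} - d_{G₂} = c`, and adding it to `G₂`
at an endpoint `u₂` where `d_{G₂} - d_{G₁} = c`. As `c > 0`, `u₁ ≠ u₂`, so `v` is one of them.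
Both trees `A ∩ Gᵢ` meet `v`, hence `d_G(v) = d_{G₁}(v) + d_{G₂}(v) + 1 ≥ c + 3` and
`d_G(v) ≡ c + 1 (mod 2)`.
-/

namespace Multigraph

variable {V E E' : Type*}

section comapEdges

/-- For injective `f`, the spanning subgraph of `G` on the edges in `Set.range f`. -/
def comapEdges (G : Multigraph V E) (f : E' → E) : Multigraph V E' :=
  ⟨G.ends ∘ f, fun e => G.loopless (f e)⟩

variable (G : Multigraph V E) {f : E' → E}

lemma adj_comapEdges (S : Set E') (a b : V) :
    (G.comapEdges f).Adj S a b ↔ G.Adj (f '' S) a b := by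
  constructor
  · rintro ⟨e, he, h⟩
    exact ⟨f e, ⟨e, he, rfl⟩, h⟩
  · rintro ⟨_, ⟨e, he, rfl⟩, h⟩
    exact ⟨e, he, h⟩

lemma reachable_comapEdges (S : Set E') (a b : V) :
    (G.comapEdges f).Reachable S a b ↔ G.Reachable (f '' S) a b :=
  ⟨Relation.ReflTransGen.mono (fun x y => (G.adj_comapEdges S x y).mp) a b,
    Relation.ReflTransGen.mono (fun x y => (G.adj_comapEdges S x y).mpr) a b⟩

lemma isSpanningTree_comapEdges (hf : f.Injective) (S : Set E') :
    (G.comapEdges f).IsSpanningTree S ↔ G.IsSpanningTree (f '' S) := by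
  have hdel : ∀ e ∈ S, f '' (S \ {e}) = f '' S \ {f e} := fun e _ => by
    rw [Set.image_sdiff hf, Set.image_singleton]
  simp only [IsSpanningTree, Connected, Acyclic, reachable_comapEdges, Set.forall_mem_image]
  constructor
  · rintro ⟨hcon, hac⟩
    exact ⟨hcon, fun e he a b hab => by rw [← hdel e he]; exact hac e he a b hab⟩
  · rintro ⟨hcon, hac⟩
    exact ⟨hcon, fun e he a b hab => by rw [hdel e he]; exact hac he a b hab⟩

lemma deg_comapEdges (hf : f.Injective) (S : Set E') (v : V) :
    (G.comapEdges f).deg S v = G.deg (f '' S) v := by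
  have h : G.incEdges (f '' S) v = f '' ((G.comapEdges f).incEdges S v) := by
    ext x
    constructor
    · rintro ⟨⟨e, he, rfl⟩, hv⟩
      exact ⟨e, ⟨he, hv⟩, rfl⟩
    · rintro ⟨e, ⟨he, hv⟩, rfl⟩
      exact ⟨⟨e, he, rfl⟩, hv⟩
  rw [deg, deg, h, Set.ncard_image_of_injective _ hf]

variable {G} {c : ℕ} {A M : Set E}

lemma GoodDecomp.of_comapEdges (hf : f.Injective) (hA : A ⊆ Set.range f)
    (h : (G.comapEdges f).GoodDecomp c (f ⁻¹' A)) :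
    ∃ S T : Set E, S ∪ T = Set.range f ∧ Disjoint S T ∧ G.Balanced c S T ∧
      G.IsSpanningTree (A ∩ S) ∧ G.IsSpanningTree (A ∩ T) := by
  obtain ⟨S, T, hST, hd, hbal, hS, hT⟩ := h
  have htree : ∀ U, (G.comapEdges f).IsSpanningTree (f ⁻¹' A ∩ U) →
      G.IsSpanningTree (A ∩ f '' U) := fun U hU => by
    rwa [G.isSpanningTree_comapEdges hf, Set.image_inter hf,
      Set.image_preimage_eq_of_subset hA] at hU
  refine ⟨f '' S, f '' T, by rw [← Set.image_union, hST, Set.image_univ],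
    (Set.disjoint_image_iff hf).mpr hd, fun v => ?_, htree S hS, htree T hT⟩
  simpa only [G.deg_comapEdges hf] using hbal v

lemma AMCounterexample.comapEdges (h : G.AMCounterexample c A M) (hf : f.Injective)
    (hA : A ⊆ Set.range f) (hno : ¬ (G.comapEdges f).GoodDecomp c (f ⁻¹' A)) :
    (G.comapEdges f).AMCounterexample c (f ⁻¹' A) (f ⁻¹' M) := by
  obtain ⟨hAM, hd, ⟨T₁, T₂, hT, hdT, hT₁, hT₂⟩, -⟩ := h
  have htree : ∀ U ⊆ A, G.IsSpanningTree U → (G.comapEdges f).IsSpanningTree (f ⁻¹' U) :=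
    fun U hU hUt => by
      rwa [G.isSpanningTree_comapEdges hf, Set.image_preimage_eq_of_subset (hU.trans hA)]
  refine ⟨by rw [← Set.preimage_union, hAM, Set.preimage_univ], hd.preimage f,
    ⟨f ⁻¹' T₁, f ⁻¹' T₂, by rw [← Set.preimage_union, hT], hdT.preimage f,
      htree T₁ (hT ▸ Set.subset_union_left) hT₁, htree T₂ (hT ▸ Set.subset_union_right) hT₂⟩,
    hno⟩

end comapEdges

section partition

variable {G : Multigraph V E} {c : ℕ} {S T : Set E} {e : E}

lemma Balanced.symm (h : G.Balanced c S T) : G.Balanced c T S :=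
  fun v => abs_sub_comm (G.deg S v : ℤ) (G.deg T v) ▸ h v

lemma notMem_left_of_union_eq_compl_singleton (hST : S ∪ T = {e}ᶜ) : e ∉ S :=
  fun he => (hST ▸ Set.mem_union_left T he : e ∈ ({e}ᶜ : Set E)) rfl

end partition

section degree

variable [Finite E] (G : Multigraph V E)

lemma deg_mono {S T : Set E} (h : S ⊆ T) (v : V) : G.deg S v ≤ G.deg T v :=
  Set.ncard_le_ncard fun _ hx => ⟨h hx.1, hx.2⟩

lemma deg_union {S T : Set E} (hd : Disjoint S T) (v : V) :
    G.deg (S ∪ T) v = G.deg S v + G.deg T v := by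
  have h : G.incEdges (S ∪ T) v = G.incEdges S v ∪ G.incEdges T v := by
    ext x
    simp only [incEdges, Set.mem_ofPred_eq, Set.mem_union]
    tauto
  rw [deg, h, Set.ncard_union_eq (hd.mono (fun _ hx => hx.1) (fun _ hx => hx.1))]
  rfl

lemma deg_insert {S : Set E} {e : E} (he : e ∉ S) (v : V) [Decidable (v ∈ G.ends e)] :
    G.deg (insert e S) v = G.deg S v + if v ∈ G.ends e then 1 else 0 := by
  rw [Set.insert_eq, deg_union G (Set.disjoint_singleton_left.mpr he), add_comm]
  congr 1
  split_ifs with hv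
  · exact (Set.ncard_eq_one.mpr ⟨e, Set.ext fun x => ⟨fun hx => hx.1, fun hx => ⟨hx, hx ▸ hv⟩⟩⟩)
  · exact (Set.ncard_eq_zero).mpr (Set.ext fun x => ⟨fun hx => hv (hx.1 ▸ hx.2), False.elim⟩)

lemma one_le_deg_of_connected {S : Set E} (hS : G.Connected S) {a b : V} (hab : a ≠ b) :
    1 ≤ G.deg S a := by
  rcases (hS a b).cases_head with rfl | ⟨_, ⟨e, he, hends⟩, -⟩
  · exact absurd rfl hab
  · exact (Set.ncard_pos).mpr ⟨e, he, hends ▸ Sym2.mem_mk_left _ _⟩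

end degree

section deletion

variable [Finite E] {G : Multigraph V E} {c : ℕ} {A S T : Set E} {e : E}

lemma deg_univ_of_union_eq_compl_singleton (hST : S ∪ T = {e}ᶜ) (hd : Disjoint S T) {v : V}
    (hv : v ∈ G.ends e) : G.deg Set.univ v = G.deg S v + G.deg T v + 1 := by
  classical
  have huniv : (Set.univ : Set E) = insert e (S ∪ T) := by
    rw [hST]
    ext x
    by_cases hx : x = e <;> simp [hx]
  rw [huniv, G.deg_insert (by rw [hST]; exact fun h => h rfl), if_pos hv, G.deg_union hd]

lemma exists_mem_ends_deg_sub_eq (hno : ¬ G.GoodDecomp c A) (heA : e ∉ A)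
    (hST : S ∪ T = {e}ᶜ) (hd : Disjoint S T) (hbal : G.Balanced c S T)
    (hS : G.IsSpanningTree (A ∩ S)) (hT : G.IsSpanningTree (A ∩ T)) :
    ∃ u ∈ G.ends e, (G.deg S u : ℤ) - G.deg T u = c := by
  classical
  have heS := notMem_left_of_union_eq_compl_singleton hST
  have heT := notMem_left_of_union_eq_compl_singleton ((Set.union_comm T S).trans hST)
  by_contra! hlim
  refine hno ⟨insert e S, T, ?_, ?_, fun u => ?_, by rwa [Set.inter_insert_of_notMem heA], hT⟩
  · rw [Set.insert_union, hST]
    ext x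
    by_cases hx : x = e <;> simp [hx]
  · exact Set.disjoint_insert_left.mpr ⟨heT, hd⟩
  · have hu := abs_le.mp (hbal u)
    rw [G.deg_insert heS]
    split_ifs with hue
    · have := hlim u hue
      rw [abs_le]
      push_cast
      omega
    · simpa using hbal u

lemma big_and_deg_mod_two_of_deg_sub_eq (hST : S ∪ T = {e}ᶜ) (hd : Disjoint S T)
    (hT : G.IsSpanningTree (A ∩ T)) {v w : V} (hv : v ∈ G.ends e) (hvw : v ≠ w)
    (hlim : (G.deg S v : ℤ) - G.deg T v = c) :
    G.Big c v ∧ G.deg Set.univ v % 2 = (c + 1) % 2 := by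
  have hsplit := deg_univ_of_union_eq_compl_singleton hST hd hv
  have hpos : 1 ≤ G.deg T v :=
    (G.one_le_deg_of_connected hT.1 hvw).trans (G.deg_mono Set.inter_subset_right v)
  unfold Big
  omega

lemma big_and_deg_mod_two_of_not_goodDecomp (hc : 0 < c) (hno : ¬ G.GoodDecomp c A)
    (heA : e ∉ A) (hST : S ∪ T = {e}ᶜ) (hd : Disjoint S T) (hbal : G.Balanced c S T)
    (hS : G.IsSpanningTree (A ∩ S)) (hT : G.IsSpanningTree (A ∩ T)) {v : V}
    (hv : v ∈ G.ends e) : G.Big c v ∧ G.deg Set.univ v % 2 = (c + 1) % 2 := by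
  have hTS : T ∪ S = {e}ᶜ := (Set.union_comm T S).trans hST
  obtain ⟨u₁, hu₁, h₁⟩ := exists_mem_ends_deg_sub_eq hno heA hST hd hbal hS hT
  obtain ⟨u₂, hu₂, h₂⟩ := exists_mem_ends_deg_sub_eq hno heA hTS hd.symm hbal.symm hT hS
  have hne : u₁ ≠ u₂ := by
    rintro rfl
    omega
  have hends := (Sym2.mem_and_mem_iff hne).mp ⟨hu₁, hu₂⟩
  rcases Sym2.mem_iff.mp (hends ▸ hv) with rfl | rfl
  · exact big_and_deg_mod_two_of_deg_sub_eq hST hd hT hu₁ hne h₁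
  · exact big_and_deg_mod_two_of_deg_sub_eq hTS hd.symm hS hu₂ hne.symm h₂

end deletion

end Multigraph

/-- **Theorem (Statement 13).** Let `G = A + M` be a counterexample (`c ≥ 2`)
with `e(M)` minimal and, subject to this, `|V(G)|` minimal.  Then every vertex
incident to an edge of `M` is big and has degree `≡ c + 1 (mod 2)`. -/
theorem M_edge_endpoints_big_odd (c : ℕ) (hc : 2 ≤ c) (n m : ℕ)
    (G : Multigraph (Fin n) (Fin m)) (A M : Set (Fin m))
    (hcex : G.AMCounterexample c A M)
    (hmin : ∀ (n' m' : ℕ) (G' : Multigraph (Fin n') (Fin m'))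
      (A' M' : Set (Fin m')), G'.AMCounterexample c A' M' →
      M.ncard ≤ M'.ncard ∧ (M.ncard = M'.ncard → n ≤ n')) :
    ∀ e ∈ M, ∀ v : Fin n, v ∈ G.ends e →
      G.Big c v ∧ G.deg Set.univ v % 2 = (c + 1) % 2 := by
  intro e he v hv
  cases m with
  | zero => exact e.elim0
  | succ m =>
  have hf : Function.Injective e.succAbove := Fin.succAbove_right_injective
  have heA : e ∉ A := hcex.2.1.notMem_of_mem_right he
  have hA : A ⊆ Set.range e.succAbove := by
    rw [Fin.range_succAbove]
    exact Set.subset_compl_singleton_iff.mpr heA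
  by_cases hgood : (G.comapEdges e.succAbove).GoodDecomp c (e.succAbove ⁻¹' A)
  · obtain ⟨S, T, hST, hd, hbal, hS, hT⟩ := hgood.of_comapEdges hf hA
    rw [Fin.range_succAbove] at hST
    exact Multigraph.big_and_deg_mod_two_of_not_goodDecomp (by omega) hcex.2.2.2 heA hST hd hbal
      hS hT hv
  · have hle := (hmin _ _ _ _ _ (hcex.comapEdges hf hA hgood)).1
    have hlt : (e.succAbove ⁻¹' M).ncard < M.ncard := by
      rw [← Set.ncard_image_of_injective _ hf, Set.image_preimage_eq_inter_range]
      refine Set.ncard_lt_ncard ((Set.ssubset_iff_of_subset Set.inter_subset_left).mpr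
        ⟨e, he, ?_⟩)
      simp [Fin.range_succAbove]
    omega
end
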